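/- Let 0 < a < b, c = k(b-a) + da with k an integer, and let ‖·‖_box denote the spectral box-norm on R^{d×T} (the box-norm applied to the singular values). Then for every matrix W, ‖W‖²_box = min_{Z ∈ R^{d×T}} ( (1/a)‖W-Z‖_F² + (1/(b-a))‖Z‖²_(k) ), where ‖Z‖_(k) is the spectral k-support norm. -/

import Mathlib

open Matrix

noncomputable def thetaNorm {d : ℕ} (Θ : Set (Fin d → ℝ)) (w : Fin d → ℝ) : ℝ :=
  Real.sqrt (⨅ θ : Θ, ∑ i, w i ^ 2 / (θ : Fin d → ℝ) i)

/-- `s` is the (nonincreasing, nonnegative) vector of singular values of `W`,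
witnessed by a singular value decomposition. -/
def IsSVD {d T : ℕ} (W : Matrix (Fin d) (Fin T) ℝ) (s : Fin (min d T) → ℝ) : Prop :=
  Antitone s ∧ (∀ i, 0 ≤ s i) ∧
    ∃ U : Matrix (Fin d) (Fin d) ℝ, U * Uᵀ = 1 ∧
      ∃ V : Matrix (Fin T) (Fin T) ℝ, V * Vᵀ = 1 ∧
        W = U * (Matrix.of fun (i : Fin d) (j : Fin T) =>
          if h : (i : ℕ) = (j : ℕ) ∧ (i : ℕ) < min d T then s ⟨(i : ℕ), h.2⟩ else 0) * Vᵀ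

/-!
Writing `θ = a + (b - a) φ`, the box constraints on `θ` become the `k`-support constraints on `φ`,
and coordinatewise `s² / θ = min_z ((s - z)² / a + z² / (θ - a))`, the minimum being attained at
`z = s (1 - a / θ)`. Minimizing first over `z` and then over `φ` gives the vector identity
`‖s‖²_box = min_z ((1/a) ‖s - z‖² + (1/(b-a)) ‖z‖²_(k))`; the minimum is attained because the box
set is compact and, by the rearrangement inequality, has a nonincreasing minimizer, which makes
the optimal `z` nonincreasing too.

For matrices, von Neumann's trace inequality gives Mirsky's inequality
`‖σ(W) - σ(Z)‖ ≤ ‖W - Z‖_F`, so the matrix objective is bounded below by the vector one at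
`s = σ(W)`, and equality holds for `Z = U diag(z) Vᵀ` built from the SVD `W = U diag(s) Vᵀ`.
Von Neumann's inequality itself reduces, via `2 p q ≤ p² + q²` on the entries of the two
orthogonal factors, to `⟨s, C z⟩ ≤ ⟨s, z⟩` for doubly substochastic `C`, which follows from
Birkhoff's theorem and the rearrangement inequality.
-/

open Finset Filter Topology

section Rearrangement

theorem Monovary.sumElim_zero {ι κ : Type*} {s z : ι → ℝ} (h : Monovary s z) (hs : 0 ≤ s)
    (hz : 0 ≤ z) : Monovary (Sum.elim s (0 : κ → ℝ)) (Sum.elim z 0) := by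
  rintro (i | i) (j | j) hij <;> simp only [Sum.elim_inl, Sum.elim_inr, Pi.zero_apply] at hij ⊢
  · exact h hij
  · exact absurd hij (hz i).not_gt
  · exact hs j
  · exact le_rfl

variable {ι : Type*} [Fintype ι] [DecidableEq ι] {s z : ι → ℝ}

theorem Monovary.dotProduct_mulVec_le_of_mem_doublyStochastic (h : Monovary s z)
    {M : Matrix ι ι ℝ} (hM : M ∈ doublyStochastic ℝ ι) : s ⬝ᵥ (M *ᵥ z) ≤ s ⬝ᵥ z := by
  have hlin : IsLinearMap ℝ fun M : Matrix ι ι ℝ => s ⬝ᵥ (M *ᵥ z) :=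
    ⟨fun M N => by simp [add_mulVec, dotProduct_add],
      fun c M => by simp [smul_mulVec, dotProduct_smul]⟩
  rw [← SetLike.mem_coe, doublyStochastic_eq_convexHull_permMatrix] at hM
  refine convexHull_min ?_ (convex_halfSpace_le hlin _) hM
  rintro _ ⟨σ, rfl⟩
  simpa [permMatrix_mulVec, dotProduct] using h.sum_mul_comp_perm_le_sum_mul (σ := σ)

theorem Monovary.dotProduct_mulVec_le_of_sum_le_one (h : Monovary s z) (hs : 0 ≤ s) (hz : 0 ≤ z)
    {C : Matrix ι ι ℝ} (hC : ∀ i j, 0 ≤ C i j) (hrow : ∀ i, ∑ j, C i j ≤ 1)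
    (hcol : ∀ j, ∑ i, C i j ≤ 1) : s ⬝ᵥ (C *ᵥ z) ≤ s ⬝ᵥ z := by
  -- `D` is doubly stochastic: its off-diagonal blocks make up the row and column defects of `C`.
  set D := fromBlocks C (diagonal fun i => 1 - ∑ j, C i j) (diagonal fun j => 1 - ∑ i, C i j) Cᵀ
  have hD : D ∈ doublyStochastic ℝ (ι ⊕ ι) := by
    rw [mem_doublyStochastic_iff_sum]
    refine ⟨?_, ?_, ?_⟩
    · rintro (i | i) (j | j) <;> simp [D, diagonal_apply, hC] <;> split_ifs <;> simp [hrow, hcol]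
    · rintro (i | i) <;> simp [D, Fintype.sum_sum_type, diagonal_apply]
    · rintro (j | j) <;> simp [D, Fintype.sum_sum_type, diagonal_apply]
  simpa [D, fromBlocks_mulVec] using
    (h.sumElim_zero hs hz).dotProduct_mulVec_le_of_mem_doublyStochastic hD

end Rearrangement

namespace Matrix

section Square
variable {ι : Type*} [Fintype ι]

theorem dotProduct_mulVec_hadamard_le {s z : ι → ℝ} (hs : 0 ≤ s) (hz : 0 ≤ z)
    (A B : Matrix ι ι ℝ) :
    s ⬝ᵥ ((A ⊙ B) *ᵥ z) ≤ (s ⬝ᵥ ((A ⊙ A) *ᵥ z) + s ⬝ᵥ ((B ⊙ B) *ᵥ z)) / 2 := by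
  simp only [dotProduct, mulVec, hadamard_apply, mul_sum, ← sum_add_distrib, sum_div]
  gcongr with i _ j _
  nlinarith [mul_nonneg (mul_nonneg (hs i) (hz j)) (sq_nonneg (A i j - B i j))]

theorem sum_sq_eq_trace_mul_transpose {κ : Type*} [Fintype κ] (M : Matrix ι κ ℝ) :
    ∑ i, ∑ j, M i j ^ 2 = trace (M * Mᵀ) := by
  simp [trace, mul_apply, sq]

variable [DecidableEq ι]

theorem trace_diagonal_mul_diagonal_mul (s z : ι → ℝ) (P Q : Matrix ι ι ℝ) :
    trace (diagonal s * P * diagonal z * Q) = s ⬝ᵥ ((P ⊙ Qᵀ) *ᵥ z) := by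
  simp only [trace, diag_apply, mul_apply, dotProduct, mulVec, hadamard_apply, transpose_apply,
    mul_sum]
  refine sum_congr rfl fun k _ => sum_congr rfl fun l _ => ?_
  rw [sum_eq_single l] <;> simp +contextual [diagonal_apply]
  ring

theorem transpose_submatrix_one_mul_mul {κ : Type*} (e : κ → ι) (M : Matrix ι ι ℝ) :
    ((1 : Matrix ι ι ℝ).submatrix id e)ᵀ * M * (1 : Matrix ι ι ℝ).submatrix id e =
      M.submatrix e e := by
  ext i j
  simp [mul_apply, one_apply]

theorem transpose_mul_mul_transpose_eq_one {A B : Matrix ι ι ℝ} (hA : A * Aᵀ = 1)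
    (hB : B * Bᵀ = 1) : Aᵀ * B * (Aᵀ * B)ᵀ = 1 := by
  rw [transpose_mul, transpose_transpose, Matrix.mul_assoc, ← Matrix.mul_assoc B, hB,
    Matrix.one_mul, mul_eq_one_comm.mp hA]

theorem sum_apply_comp_sq_le_one {κ : Type*} [Fintype κ] {P : Matrix ι ι ℝ} (hP : P * Pᵀ = 1)
    (e : κ ↪ ι) (i : ι) : ∑ l, P i (e l) ^ 2 ≤ 1 := by
  have hrow : ∑ j, P i j ^ 2 = 1 := by
    simpa [mul_apply, sq] using congrFun (congrFun hP i) i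
  rw [← hrow, ← sum_map univ e fun j => P i j ^ 2]
  exact sum_le_univ_sum_of_nonneg fun _ => sq_nonneg _

theorem _root_.Monovary.dotProduct_mulVec_submatrix_hadamard_self_le {κ : Type*} [Fintype κ]
    [DecidableEq κ] {s z : κ → ℝ} (h : Monovary s z) (hs : 0 ≤ s) (hz : 0 ≤ z)
    {P : Matrix ι ι ℝ} (hP : P * Pᵀ = 1) (e : κ ↪ ι) :
    s ⬝ᵥ ((P.submatrix e e ⊙ P.submatrix e e) *ᵥ z) ≤ s ⬝ᵥ z := by
  have hPt : Pᵀ * Pᵀᵀ = 1 := by rw [transpose_transpose, mul_eq_one_comm.mp hP]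
  refine h.dotProduct_mulVec_le_of_sum_le_one hs hz (fun i j => by simp [← sq, sq_nonneg])
    (fun i => ?_) (fun j => ?_)
  · simpa [← sq] using sum_apply_comp_sq_le_one hP e (e i)
  · simpa [← sq] using sum_apply_comp_sq_le_one hPt e (e j)

end Square

section RectDiagonal
variable {k m n : ℕ}

def rectDiagonal (s : Fin k → ℝ) : Matrix (Fin m) (Fin n) ℝ :=
  of fun i j => if h : (i : ℕ) = (j : ℕ) ∧ (i : ℕ) < k then s ⟨(i : ℕ), h.2⟩ else 0

theorem rectDiagonal_sub (s z : Fin k → ℝ) :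
    (rectDiagonal s - rectDiagonal z : Matrix (Fin m) (Fin n) ℝ) = rectDiagonal (s - z) := by
  ext i j
  simp only [rectDiagonal, sub_apply, of_apply, Pi.sub_apply]
  split_ifs <;> simp

theorem rectDiagonal_eq_mul_diagonal_mul (hm : k ≤ m) (hn : k ≤ n) (s : Fin k → ℝ) :
    (rectDiagonal s : Matrix (Fin m) (Fin n) ℝ) =
      (1 : Matrix (Fin m) (Fin m) ℝ).submatrix id (Fin.castLE hm) * diagonal s *
        ((1 : Matrix (Fin n) (Fin n) ℝ).submatrix id (Fin.castLE hn))ᵀ := by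
  ext i j
  rw [mul_apply]
  simp only [rectDiagonal, of_apply, mul_diagonal, submatrix_apply, transpose_apply, id, one_apply]
  split_ifs with h
  · rw [sum_eq_single ⟨i, h.2⟩]
    · simp [Fin.ext_iff, h.1]
    · intro l _ hl
      simp [Fin.ext_iff] at hl ⊢
      omega
    · simp
  · refine (sum_eq_zero fun l _ => ?_).symm
    simp [Fin.ext_iff]
    omega

theorem trace_rectDiagonal_mul_transpose (hm : k ≤ m) (hn : k ≤ n) (s z : Fin k → ℝ)
    (U₁ U₂ : Matrix (Fin m) (Fin m) ℝ) (V₁ V₂ : Matrix (Fin n) (Fin n) ℝ) :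
    trace (U₁ * (rectDiagonal s : Matrix (Fin m) (Fin n) ℝ) * V₁ᵀ *
        (U₂ * (rectDiagonal z : Matrix (Fin m) (Fin n) ℝ) * V₂ᵀ)ᵀ) =
      s ⬝ᵥ (((V₁ᵀ * V₂).submatrix (Fin.castLE hn) (Fin.castLE hn) ⊙
        ((U₂ᵀ * U₁).submatrix (Fin.castLE hm) (Fin.castLE hm))ᵀ) *ᵥ z) := by
  set Jm := (1 : Matrix (Fin m) (Fin m) ℝ).submatrix id (Fin.castLE hm)
  set Jn := (1 : Matrix (Fin n) (Fin n) ℝ).submatrix id (Fin.castLE hn)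
  calc _ = trace ((U₁ * Jm) *
        (diagonal s * (Jnᵀ * (V₁ᵀ * V₂) * Jn) * diagonal z * (Jmᵀ * U₂ᵀ))) := by
        simp only [rectDiagonal_eq_mul_diagonal_mul hm hn, transpose_mul, transpose_transpose,
          diagonal_transpose, Matrix.mul_assoc, Jm, Jn]
    _ = _ := by
        rw [trace_mul_comm, ← trace_diagonal_mul_diagonal_mul, ← transpose_submatrix_one_mul_mul,
          ← transpose_submatrix_one_mul_mul]
        simp only [Matrix.mul_assoc, Jm, Jn]

theorem trace_rectDiagonal_mul_transpose_of_orthogonal (hm : k ≤ m) (hn : k ≤ n)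
    (s z : Fin k → ℝ) {U : Matrix (Fin m) (Fin m) ℝ} (hU : U * Uᵀ = 1)
    {V : Matrix (Fin n) (Fin n) ℝ} (hV : V * Vᵀ = 1) :
    trace (U * (rectDiagonal s : Matrix (Fin m) (Fin n) ℝ) * Vᵀ *
        (U * (rectDiagonal z : Matrix (Fin m) (Fin n) ℝ) * Vᵀ)ᵀ) = s ⬝ᵥ z := by
  rw [trace_rectDiagonal_mul_transpose hm hn, mul_eq_one_comm.mp hU, mul_eq_one_comm.mp hV,
    submatrix_one _ (Fin.castLE_injective hn), submatrix_one _ (Fin.castLE_injective hm)]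
  simp [hadamard_one]

theorem sum_sq_sub_rectDiagonal_of_orthogonal (hm : k ≤ m) (hn : k ≤ n) (s z : Fin k → ℝ)
    {U : Matrix (Fin m) (Fin m) ℝ} (hU : U * Uᵀ = 1) {V : Matrix (Fin n) (Fin n) ℝ}
    (hV : V * Vᵀ = 1) :
    ∑ i, ∑ j, ((U * (rectDiagonal s : Matrix (Fin m) (Fin n) ℝ) * Vᵀ) i j -
        (U * (rectDiagonal z : Matrix (Fin m) (Fin n) ℝ) * Vᵀ) i j) ^ 2 =
      ∑ i, (s i - z i) ^ 2 := by
  simp only [← sub_apply, sum_sq_eq_trace_mul_transpose, ← Matrix.sub_mul, ← Matrix.mul_sub,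
    rectDiagonal_sub, trace_rectDiagonal_mul_transpose_of_orthogonal hm hn _ _ hU hV]
  simp [dotProduct, sq]

end RectDiagonal

end Matrix

section IsSVD
variable {d T : ℕ} {A B : Matrix (Fin d) (Fin T) ℝ} {s z : Fin (min d T) → ℝ}

theorem isSVD_iff : IsSVD A s ↔ Antitone s ∧ (∀ i, 0 ≤ s i) ∧
    ∃ U : Matrix (Fin d) (Fin d) ℝ, U * Uᵀ = 1 ∧
      ∃ V : Matrix (Fin T) (Fin T) ℝ, V * Vᵀ = 1 ∧
        A = U * (rectDiagonal s : Matrix (Fin d) (Fin T) ℝ) * Vᵀ :=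
  Iff.rfl

theorem IsSVD.trace_mul_transpose_le (hA : IsSVD A s) (hB : IsSVD B z) :
    trace (A * Bᵀ) ≤ s ⬝ᵥ z := by
  obtain ⟨hs, hs0, U₁, hU₁, V₁, hV₁, rfl⟩ := isSVD_iff.1 hA
  obtain ⟨hz, hz0, U₂, hU₂, V₂, hV₂, rfl⟩ := isSVD_iff.1 hB
  have hsz := hs.monovary hz
  rw [trace_rectDiagonal_mul_transpose (min_le_left d T) (min_le_right d T), transpose_submatrix,
    transpose_mul, transpose_transpose]
  calc _ ≤ (_ + _) / 2 := dotProduct_mulVec_hadamard_le hs0 hz0 _ _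
    _ ≤ (s ⬝ᵥ z + s ⬝ᵥ z) / 2 := by
      gcongr
      · exact hsz.dotProduct_mulVec_submatrix_hadamard_self_le hs0 hz0
          (transpose_mul_mul_transpose_eq_one hV₁ hV₂) (Fin.castLEEmb (min_le_right d T))
      · exact hsz.dotProduct_mulVec_submatrix_hadamard_self_le hs0 hz0
          (transpose_mul_mul_transpose_eq_one hU₁ hU₂) (Fin.castLEEmb (min_le_left d T))
    _ = s ⬝ᵥ z := by ring

theorem IsSVD.trace_mul_transpose_self (hA : IsSVD A s) : trace (A * Aᵀ) = s ⬝ᵥ s := by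
  obtain ⟨-, -, U, hU, V, hV, rfl⟩ := isSVD_iff.1 hA
  exact trace_rectDiagonal_mul_transpose_of_orthogonal (min_le_left d T) (min_le_right d T) s s
    hU hV

theorem IsSVD.sum_sub_sq_le (hA : IsSVD A s) (hB : IsSVD B z) :
    ∑ i, (s i - z i) ^ 2 ≤ ∑ i, ∑ j, (A i j - B i j) ^ 2 := by
  have hBA : trace (B * Aᵀ) = trace (A * Bᵀ) := by
    rw [← trace_transpose, transpose_mul, transpose_transpose]
  have hM : ∑ i, ∑ j, (A i j - B i j) ^ 2 =
      trace (A * Aᵀ) - 2 * trace (A * Bᵀ) + trace (B * Bᵀ) := by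
    simp only [← Matrix.sub_apply, sum_sq_eq_trace_mul_transpose, transpose_sub, Matrix.sub_mul,
      Matrix.mul_sub, trace_sub, hBA]
    ring
  have hv : ∑ i, (s i - z i) ^ 2 = s ⬝ᵥ s - 2 * (s ⬝ᵥ z) + z ⬝ᵥ z := by
    rw [dotProduct, dotProduct, dotProduct, mul_sum, ← sum_sub_distrib, ← sum_add_distrib]
    exact sum_congr rfl fun i _ => by ring
  rw [hM, hv, hA.trace_mul_transpose_self, hB.trace_mul_transpose_self]
  linarith [hA.trace_mul_transpose_le hB]

theorem IsSVD.unique (hs : IsSVD A s) (hz : IsSVD A z) : s = z := by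
  have h := hs.sum_sub_sq_le hz
  simp only [sub_self, zero_pow two_ne_zero, sum_const_zero] at h
  funext i
  exact sub_eq_zero.1 <| pow_eq_zero_iff two_ne_zero |>.1 <|
    (sum_eq_zero_iff_of_nonneg fun i _ => sq_nonneg _).1 (h.antisymm (by positivity)) i (mem_univ i)

end IsSVD
section Scalar
variable {a θ : ℝ}

theorem sq_div_le_sub_sq_div_add_sq_div (ha : 0 < a) (haθ : a < θ) (s z : ℝ) :
    s ^ 2 / θ ≤ (s - z) ^ 2 / a + z ^ 2 / (θ - a) := by
  have hθa : 0 < θ - a := sub_pos.2 haθ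
  rw [div_add_div _ _ ha.ne' hθa.ne', div_le_div_iff₀ (by linarith) (by positivity)]
  nlinarith [sq_nonneg ((θ - a) * (s - z) - a * z)]

-- At `θ = a` the last quotient is `0 / 0 = 0`.
theorem sq_div_eq_sub_sq_div_add_sq_div (ha : 0 < a) (haθ : a ≤ θ) (s : ℝ) :
    s ^ 2 / θ = (s - s * (1 - a / θ)) ^ 2 / a + (s * (1 - a / θ)) ^ 2 / (θ - a) := by
  rcases haθ.eq_or_lt with rfl | haθ
  · simp [ha.ne']
  · have hθ : θ ≠ 0 := (ha.trans haθ).ne'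
    have hθa : θ - a ≠ 0 := (sub_pos.2 haθ).ne'
    field_simp
    ring

end Scalar

section ThetaNorm
variable {n : ℕ} {Θ : Set (Fin n → ℝ)}

theorem thetaNorm_sq (hΘ : ∀ θ ∈ Θ, ∀ i, 0 ≤ θ i) (w : Fin n → ℝ) :
    thetaNorm Θ w ^ 2 = ⨅ θ : Θ, ∑ i, w i ^ 2 / (θ : Fin n → ℝ) i :=
  Real.sq_sqrt <| Real.iInf_nonneg fun θ =>
    sum_nonneg fun i _ => div_nonneg (sq_nonneg _) (hΘ θ θ.2 i)

theorem thetaNorm_sq_le (hΘ : ∀ θ ∈ Θ, ∀ i, 0 ≤ θ i) {θ : Fin n → ℝ} (hθ : θ ∈ Θ)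
    (w : Fin n → ℝ) : thetaNorm Θ w ^ 2 ≤ ∑ i, w i ^ 2 / θ i := by
  rw [thetaNorm_sq hΘ]
  refine ciInf_le ⟨0, ?_⟩ (⟨θ, hθ⟩ : Θ)
  rintro _ ⟨θ', rfl⟩
  exact sum_nonneg fun i _ => div_nonneg (sq_nonneg _) (hΘ θ' θ'.2 i)

theorem le_thetaNorm_sq (hΘ : ∀ θ ∈ Θ, ∀ i, 0 ≤ θ i) (hne : Θ.Nonempty) {w : Fin n → ℝ} {x : ℝ}
    (h : ∀ θ ∈ Θ, x ≤ ∑ i, w i ^ 2 / θ i) : x ≤ thetaNorm Θ w ^ 2 := by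
  have := hne.to_subtype
  rw [thetaNorm_sq hΘ]
  exact le_ciInf fun θ => h θ θ.2

end ThetaNorm

section BoxKsup

def boxSet (n : ℕ) (a b c : ℝ) : Set (Fin n → ℝ) :=
  {θ | (∀ i, a ≤ θ i ∧ θ i ≤ b) ∧ ∑ i, θ i ≤ c}

def ksupSet (n : ℕ) (k : ℝ) : Set (Fin n → ℝ) :=
  {θ | (∀ i, 0 < θ i ∧ θ i ≤ 1) ∧ ∑ i, θ i ≤ k}

variable {n : ℕ} {a b c k : ℝ}

theorem boxSet_nonneg (ha : 0 ≤ a) : ∀ θ ∈ boxSet n a b c, ∀ i, 0 ≤ θ i :=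
  fun _ hθ i => ha.trans (hθ.1 i).1

theorem ksupSet_nonneg : ∀ θ ∈ ksupSet n k, ∀ i, 0 ≤ θ i :=
  fun _ hθ i => (hθ.1 i).1.le

theorem isCompact_boxSet : IsCompact (boxSet n a b c) := by
  have : boxSet n a b c = (Set.univ.pi fun _ => Set.Icc a b) ∩ {θ | ∑ i, θ i ≤ c} := by
    ext θ
    simp only [boxSet, Set.mem_inter_iff, Set.mem_univ_pi, Set.mem_Icc, Set.mem_ofPred_eq]
  rw [this]
  exact (isCompact_univ_pi fun _ => isCompact_Icc).inter_right
    (isClosed_le (by fun_prop) continuous_const)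

theorem ksupSet_nonempty (hk : 0 < k) : (ksupSet n k).Nonempty := by
  refine ⟨fun _ => k / (n + k), fun i => ⟨by positivity, ?_⟩, ?_⟩
  · rw [div_le_one (by positivity)]; linarith [(n.cast_nonneg : (0 : ℝ) ≤ n)]
  · rw [sum_const, card_univ, Fintype.card_fin, nsmul_eq_mul, mul_div_assoc',
      div_le_iff₀ (by positivity)]
    nlinarith

theorem exists_perm_antitone_sum_div_le {w : Fin n → ℝ} (hw : Antitone w) {θ : Fin n → ℝ}
    (hθ : ∀ i, 0 < θ i) :
    ∃ τ : Equiv.Perm (Fin n), Antitone (θ ∘ τ) ∧ ∑ i, w i / θ (τ i) ≤ ∑ i, w i / θ i := by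
  set τ := Tuple.sort (-θ)
  have hτ : Antitone (θ ∘ τ) := fun i j hij => neg_le_neg_iff.1 (Tuple.monotone_sort (-θ) hij)
  refine ⟨τ, hτ, ?_⟩
  have hinv : Monotone fun i => (θ (τ i))⁻¹ := fun i j hij => inv_anti₀ (hθ _) (hτ hij)
  simpa [div_eq_mul_inv] using (hw.antivary hinv).sum_mul_le_sum_mul_comp_perm (σ := τ⁻¹)

theorem exists_antitone_isMinOn_boxSet (ha : 0 < a) (hne : (boxSet n a b c).Nonempty)
    {w : Fin n → ℝ} (hw : Antitone w) :
    ∃ θ ∈ boxSet n a b c, Antitone θ ∧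
      ∀ θ' ∈ boxSet n a b c, ∑ i, w i / θ i ≤ ∑ i, w i / θ' i := by
  have hcont : ContinuousOn (fun θ : Fin n → ℝ => ∑ i, w i / θ i) (boxSet n a b c) :=
    continuousOn_finsetSum _ fun i _ => continuousOn_const.div (continuous_apply i).continuousOn
      fun θ hθ => (ha.trans_le (hθ.1 i).1).ne'
  obtain ⟨θ, hθ, hmin⟩ := isCompact_boxSet.exists_isMinOn hne hcont
  obtain ⟨τ, hτ, hle⟩ := exists_perm_antitone_sum_div_le hw fun i => ha.trans_le (hθ.1 i).1
  refine ⟨θ ∘ τ, ⟨fun i => hθ.1 (τ i), ?_⟩, hτ, fun θ' hθ' => hle.trans (hmin hθ')⟩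
  simpa [Equiv.sum_comp τ θ] using hθ.2

theorem thetaNorm_ksupSet_sq_le (hk : 0 < k) {φ z : Fin n → ℝ} (hφ0 : ∀ i, 0 ≤ φ i)
    (hφ1 : ∀ i, φ i ≤ 1) (hφk : ∑ i, φ i ≤ k) (hz : ∀ i, φ i = 0 → z i = 0) :
    thetaNorm (ksupSet n k) z ^ 2 ≤ ∑ i, z i ^ 2 / φ i := by
  -- `0 < θ` is an open constraint: move `φ` towards an interior point `ψ` and let `ε → 0`.
  obtain ⟨ψ, hψ⟩ := ksupSet_nonempty (n := n) hk
  have hε : ∀ ε ∈ Set.Ioo (0 : ℝ) 1,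
      thetaNorm (ksupSet n k) z ^ 2 ≤ (1 - ε)⁻¹ * ∑ i, z i ^ 2 / φ i := by
    rintro ε ⟨hε0, hε1⟩
    have h1ε : 0 < 1 - ε := sub_pos.2 hε1
    have hmem : (fun i => (1 - ε) * φ i + ε * ψ i) ∈ ksupSet n k := by
      refine ⟨fun i => ⟨by nlinarith [hφ0 i, (hψ.1 i).1], by nlinarith [hφ1 i, (hψ.1 i).2]⟩, ?_⟩
      rw [sum_add_distrib, ← mul_sum, ← mul_sum]
      nlinarith [hψ.2]
    refine (thetaNorm_sq_le ksupSet_nonneg hmem z).trans ?_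
    rw [mul_sum]
    refine sum_le_sum fun i _ => ?_
    rcases (hφ0 i).eq_or_lt with h | h
    · simp [hz i h.symm]
    · rw [inv_mul_eq_div, div_div]
      exact div_le_div_of_nonneg_left (sq_nonneg _) (by positivity) (by nlinarith [(hψ.1 i).1])
  have hlim : Tendsto (fun ε : ℝ => (1 - ε)⁻¹ * ∑ i, z i ^ 2 / φ i) (𝓝[>] 0)
      (𝓝 (∑ i, z i ^ 2 / φ i)) := by
    have : ContinuousAt (fun ε : ℝ => (1 - ε)⁻¹ * ∑ i, z i ^ 2 / φ i) 0 := by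
      fun_prop (disch := norm_num)
    simpa using this.tendsto.mono_left nhdsWithin_le_nhds
  exact ge_of_tendsto hlim <| by filter_upwards [Ioo_mem_nhdsGT zero_lt_one] using hε

theorem thetaNorm_boxSet_sq_le (ha : 0 < a) (hab : a < b) (hk : 0 < k) (s z : Fin n → ℝ) :
    thetaNorm (boxSet n a b (k * (b - a) + n * a)) s ^ 2 ≤
      1 / a * ∑ i, (s i - z i) ^ 2 + 1 / (b - a) * thetaNorm (ksupSet n k) z ^ 2 := by
  have hba : 0 < b - a := sub_pos.2 hab
  set A := 1 / a * ∑ i, (s i - z i) ^ 2 with hA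
  suffices h : (thetaNorm (boxSet n a b (k * (b - a) + n * a)) s ^ 2 - A) * (b - a) ≤
      thetaNorm (ksupSet n k) z ^ 2 by
    rwa [← sub_le_iff_le_add', one_div_mul_eq_div, le_div_iff₀ hba]
  refine le_thetaNorm_sq ksupSet_nonneg (ksupSet_nonempty hk) fun φ hφ => ?_
  have hθ : (fun i => a + (b - a) * φ i) ∈ boxSet n a b (k * (b - a) + n * a) := by
    refine ⟨fun i => ⟨?_, ?_⟩, ?_⟩
    · nlinarith [(hφ.1 i).1]
    · nlinarith [(hφ.1 i).2]
    · rw [sum_add_distrib, ← mul_sum, sum_const, card_univ, Fintype.card_fin, nsmul_eq_mul]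
      nlinarith [hφ.2]
  have key : thetaNorm (boxSet n a b (k * (b - a) + n * a)) s ^ 2 ≤
      ∑ i, ((s i - z i) ^ 2 / a + z i ^ 2 / ((b - a) * φ i)) := by
    refine (thetaNorm_sq_le (boxSet_nonneg ha.le) hθ s).trans (sum_le_sum fun i _ => ?_)
    simpa using sq_div_le_sub_sq_div_add_sq_div ha
      (by nlinarith [(hφ.1 i).1] : a < a + (b - a) * φ i) (s i) (z i)
  have hsplit : ∑ i, ((s i - z i) ^ 2 / a + z i ^ 2 / ((b - a) * φ i)) =
      A + (∑ i, z i ^ 2 / φ i) / (b - a) := by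
    rw [sum_add_distrib, sum_div, hA, mul_sum]
    congr 1
    · exact sum_congr rfl fun i _ => (one_div_mul_eq_div _ _).symm
    · exact sum_congr rfl fun i _ => by rw [mul_comm, div_div]
  rw [← le_div_iff₀ hba]
  linarith

theorem moreau_le_sum_sq_div_of_mem_boxSet (ha : 0 < a) (hab : a < b) (hk : 0 < k)
    {θ : Fin n → ℝ} (hθ : θ ∈ boxSet n a b (k * (b - a) + n * a)) (s : Fin n → ℝ) :
    1 / a * ∑ i, (s i - s i * (1 - a / θ i)) ^ 2 +
        1 / (b - a) * thetaNorm (ksupSet n k) (fun i => s i * (1 - a / θ i)) ^ 2 ≤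
      ∑ i, s i ^ 2 / θ i := by
  have hba : 0 < b - a := sub_pos.2 hab
  have hK := thetaNorm_ksupSet_sq_le hk (φ := fun i => (θ i - a) / (b - a))
    (z := fun i => s i * (1 - a / θ i))
    (fun i => div_nonneg (sub_nonneg.2 (hθ.1 i).1) hba.le)
    (fun i => (div_le_one hba).2 (by linarith [(hθ.1 i).2]))
    (by
      rw [← sum_div, div_le_iff₀ hba, sum_sub_distrib, sum_const, card_univ, Fintype.card_fin,
        nsmul_eq_mul]
      linarith [hθ.2])
    (fun i h => by
      rw [div_eq_zero_iff, sub_eq_zero] at h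
      rcases h with h | h
      · simp [h, ha.ne']
      · exact absurd h hba.ne')
  calc _ ≤ 1 / a * ∑ i, (s i - s i * (1 - a / θ i)) ^ 2 +
        1 / (b - a) * ∑ i, (s i * (1 - a / θ i)) ^ 2 / ((θ i - a) / (b - a)) := by gcongr
    _ = ∑ i, s i ^ 2 / θ i := by
      rw [mul_sum, mul_sum, ← sum_add_distrib]
      refine sum_congr rfl fun i _ => ?_
      rw [sq_div_eq_sub_sq_div_add_sq_div ha (hθ.1 i).1, div_div_eq_mul_div]
      field_simp

theorem exists_antitone_moreau_le_thetaNorm_boxSet_sq (ha : 0 < a) (hab : a < b) (hk : 0 < k)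
    {s : Fin n → ℝ} (hs : Antitone s) (hs0 : ∀ i, 0 ≤ s i) :
    ∃ z : Fin n → ℝ, Antitone z ∧ (∀ i, 0 ≤ z i) ∧
      1 / a * ∑ i, (s i - z i) ^ 2 + 1 / (b - a) * thetaNorm (ksupSet n k) z ^ 2 ≤
        thetaNorm (boxSet n a b (k * (b - a) + n * a)) s ^ 2 := by
  have hne : (boxSet n a b (k * (b - a) + n * a)).Nonempty := by
    refine ⟨fun _ => a, fun _ => ⟨le_rfl, hab.le⟩, ?_⟩
    simp only [sum_const, card_univ, Fintype.card_fin, nsmul_eq_mul]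
    nlinarith
  obtain ⟨θ, hθ, hθanti, hθmin⟩ := exists_antitone_isMinOn_boxSet ha hne
    (w := fun i => s i ^ 2) fun i j hij => pow_le_pow_left₀ (hs0 j) (hs hij) 2
  have hθpos i : 0 < θ i := ha.trans_le (hθ.1 i).1
  have hfac i : 0 ≤ 1 - a / θ i := sub_nonneg.2 <| (div_le_one (hθpos i)).2 (hθ.1 i).1
  refine ⟨fun i => s i * (1 - a / θ i), fun i j hij => ?_, fun i => mul_nonneg (hs0 i) (hfac i),
    (moreau_le_sum_sq_div_of_mem_boxSet ha hab hk hθ s).trans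
      (le_thetaNorm_sq (boxSet_nonneg ha.le) hne hθmin)⟩
  exact mul_le_mul (hs hij) (sub_le_sub_left (div_le_div_of_nonneg_left ha.le (hθpos j)
    (hθanti hij)) 1) (hfac j) (hs0 i)

end BoxKsup

theorem spectral_box_moreau_of_spectral_ksup_general {d T k : ℕ} (hk1 : 1 ≤ k)
    (a b : ℝ) (ha : 0 < a) (hab : a < b)
    (σfun : Matrix (Fin d) (Fin T) ℝ → (Fin (min d T) → ℝ))
    (hσ : ∀ W, IsSVD W (σfun W)) (W : Matrix (Fin d) (Fin T) ℝ) :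
    IsLeast {x : ℝ | ∃ Z : Matrix (Fin d) (Fin T) ℝ,
        x = (1 / a) * ∑ i, ∑ j, (W i j - Z i j) ^ 2 +
          (1 / (b - a)) *
            (thetaNorm {θ : Fin (min d T) → ℝ |
              (∀ i, 0 < θ i ∧ θ i ≤ 1) ∧ ∑ i, θ i ≤ (k : ℝ)} (σfun Z)) ^ 2}
      ((thetaNorm {θ : Fin (min d T) → ℝ | (∀ i, a ≤ θ i ∧ θ i ≤ b) ∧
          ∑ i, θ i ≤ (k : ℝ) * (b - a) + (min d T : ℕ) * a} (σfun W)) ^ 2) := by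
  have hk : (0 : ℝ) < k := by exact_mod_cast hk1
  have lower (Z : Matrix (Fin d) (Fin T) ℝ) :
      thetaNorm (boxSet _ a b (k * (b - a) + (min d T : ℕ) * a)) (σfun W) ^ 2 ≤
        1 / a * ∑ i, ∑ j, (W i j - Z i j) ^ 2 +
          1 / (b - a) * thetaNorm (ksupSet _ k) (σfun Z) ^ 2 := by
    refine (thetaNorm_boxSet_sq_le ha hab hk _ (σfun Z)).trans ?_
    gcongr
    exact (hσ W).sum_sub_sq_le (hσ Z)
  refine ⟨?_, fun x ⟨Z, hx⟩ => hx ▸ lower Z⟩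
  obtain ⟨hs, hs0, U, hU, V, hV, hW⟩ := isSVD_iff.1 (hσ W)
  obtain ⟨z, hz, hz0, hle⟩ := exists_antitone_moreau_le_thetaNorm_boxSet_sq ha hab hk hs hs0
  set Z := U * (rectDiagonal z : Matrix (Fin d) (Fin T) ℝ) * Vᵀ
  have hσZ : σfun Z = z := (hσ Z).unique ⟨hz, hz0, U, hU, V, hV, rfl⟩
  have hWZ : ∑ i, ∑ j, (W i j - Z i j) ^ 2 = ∑ i, (σfun W i - z i) ^ 2 := by
    conv_lhs => rw [hW]
    exact sum_sq_sub_rectDiagonal_of_orthogonal (min_le_left d T) (min_le_right d T) _ _ hU hV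
  refine ⟨Z, le_antisymm (lower Z) ?_⟩
  rw [hWZ, hσZ]
  exact hle

theorem spectral_box_moreau_of_spectral_ksup {d T k : ℕ} (hk1 : 1 ≤ k)
    (hk : k ≤ min d T) (a b : ℝ) (ha : 0 < a) (hab : a < b)
    (σfun : Matrix (Fin d) (Fin T) ℝ → (Fin (min d T) → ℝ))
    (hσ : ∀ W, IsSVD W (σfun W)) (W : Matrix (Fin d) (Fin T) ℝ) :
    IsLeast {x : ℝ | ∃ Z : Matrix (Fin d) (Fin T) ℝ,
        x = (1 / a) * ∑ i, ∑ j, (W i j - Z i j) ^ 2 +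
          (1 / (b - a)) *
            (thetaNorm {θ : Fin (min d T) → ℝ |
              (∀ i, 0 < θ i ∧ θ i ≤ 1) ∧ ∑ i, θ i ≤ (k : ℝ)} (σfun Z)) ^ 2}
      ((thetaNorm {θ : Fin (min d T) → ℝ | (∀ i, a ≤ θ i ∧ θ i ≤ b) ∧
          ∑ i, θ i ≤ (k : ℝ) * (b - a) + (min d T : ℕ) * a} (σfun W)) ^ 2) :=
  spectral_box_moreau_of_spectral_ksup_general hk1 a b ha hab σfun hσ W
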